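/- arXiv:2111.14742 — 7 statements merged into one kernel-verified Lean document; each statement's English description precedes it below -/
import Mathlib

section
/- Let a = (a_0,…,a_n) ∈ ℤ^{n+1} and let z = (z_0, z_1, …) be a tropical recurrent sequence satisfying a. If j_0 < j_1 is a pair of neighbouring connected coordinates of z, then j_1 − j_0 ≤ n. -/
/-- The minimum of `z (j + i) + a i` over `0 ≤ i ≤ n` is attained for at least two
distinct indices `i₁ ≠ i₂`. -/
def TropWindow (n : ℕ) (a : ℕ → ℤ) (z : ℕ → ℝ) (j : ℕ) : Prop :=
  ∃ i₁ i₂ : ℕ, i₁ ≤ n ∧ i₂ ≤ n ∧ i₁ ≠ i₂ ∧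
    (∀ i ≤ n, z (j + i₁) + (a i₁ : ℝ) ≤ z (j + i) + (a i : ℝ)) ∧
    (∀ i ≤ n, z (j + i₂) + (a i₂ : ℝ) ≤ z (j + i) + (a i : ℝ))

/-- `z = (z_0, z_1, …)` is a tropical recurrent sequence satisfying the vector
`a = (a_0, …, a_n)`. -/
def TropRecSeq (n : ℕ) (a : ℕ → ℤ) (z : ℕ → ℝ) : Prop :=
  ∀ j : ℕ, TropWindow n a z j

/-- The coordinate `j` of `z` is connected: there is `k₀ ≤ min j n` such that
`z j + a k₀ = min_{0 ≤ k ≤ n} (z (j - k₀ + k) + a k)`. -/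
def ConnectedCoord (n : ℕ) (a : ℕ → ℤ) (z : ℕ → ℝ) (j : ℕ) : Prop :=
  ∃ k₀ : ℕ, k₀ ≤ j ∧ k₀ ≤ n ∧
    ∀ k ≤ n, z j + (a k₀ : ℝ) ≤ z (j - k₀ + k) + (a k : ℝ)

/-- If `j₀ < j₁` is a pair of neighbouring connected coordinates of a tropical
recurrent sequence `z` satisfying `a = (a_0, …, a_n)`, then `j₁ - j₀ ≤ n`. -/
theorem neighbouring_connected_gap_le (n : ℕ) (a : ℕ → ℤ) (z : ℕ → ℝ)
    (hz : TropRecSeq n a z) (j₀ j₁ : ℕ) (hlt : j₀ < j₁)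
    (hc₀ : ConnectedCoord n a z j₀) (hc₁ : ConnectedCoord n a z j₁)
    (hnb : ∀ j, j₀ < j → j < j₁ → ¬ ConnectedCoord n a z j) :
    j₁ - j₀ ≤ n := by
  by_contra h
  push_neg at h
  -- so j₀ + 1 + n ≤ j₁
  have hbig : j₀ + 1 + n ≤ j₁ := by omega
  obtain ⟨i₁, i₂, h₁n, h₂n, hne, hmin₁, hmin₂⟩ := hz (j₀ + 1)
  -- a minimizer i of the window at j₀+1 makes j₀+1+i connected
  have key : ∀ i, i ≤ n →
      (∀ k ≤ n, z (j₀ + 1 + i) + (a i : ℝ) ≤ z (j₀ + 1 + k) + (a k : ℝ)) →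
      ConnectedCoord n a z (j₀ + 1 + i) := by
    intro i hin hmin
    refine ⟨i, by omega, hin, fun k hk => ?_⟩
    have : j₀ + 1 + i - i + k = j₀ + 1 + k := by omega
    rw [this]
    exact hmin k hk
  -- at most one of i₁, i₂ can satisfy j₀ + 1 + i = j₁
  rcases eq_or_ne (j₀ + 1 + i₁) j₁ with h1 | h1
  · have h2 : j₀ + 1 + i₂ ≠ j₁ := by omega
    exact hnb _ (by omega) (by omega) (key i₂ h₂n hmin₂)
  · exact hnb _ (by omega) (by omega) (key i₁ h₁n hmin₁)
end

section
/- Let a = (a_0,…,a_n) ∈ ℤ^{n+1} with amplitude max_i a_i − min_i a_i ≤ M, and let z = (z_0, z_1, …) be a tropical recurrent sequence satisfying a. If j_0 < j_1 is a pair of neighbouring connected coordinates of z, then |z_{j_0} − z_{j_1}| ≤ 2M. -/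
/-- A position where the minimum of a window is attained is a connected coordinate. -/
lemma min_pos_connected (n : ℕ) (a : ℕ → ℤ) (z : ℕ → ℝ) (s i : ℕ) (hin : i ≤ n)
    (hmin : ∀ k ≤ n, z (s + i) + (a i : ℝ) ≤ z (s + k) + (a k : ℝ)) :
    ConnectedCoord n a z (s + i) := by
  refine ⟨i, Nat.le_add_left i s, hin, fun k hk => ?_⟩
  have h : s + i - i + k = s + k := by omega
  rw [h]
  exact hmin k hk

/-- A connected coordinate's value is at most the value at any coordinate of its
witness window, plus `M`. -/
lemma conn_le (n : ℕ) (a : ℕ → ℤ) (M : ℤ)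
    (hM : ∀ i ≤ n, ∀ i' ≤ n, a i - a i' ≤ M) (z : ℕ → ℝ) (j k₀ : ℕ)
    (hk₀j : k₀ ≤ j) (hk₀n : k₀ ≤ n)
    (h : ∀ k ≤ n, z j + (a k₀ : ℝ) ≤ z (j - k₀ + k) + (a k : ℝ))
    (x : ℕ) (hx1 : j - k₀ ≤ x) (hx2 : x ≤ j - k₀ + n) :
    z j ≤ z x + (M : ℝ) := by
  have hk : x - (j - k₀) ≤ n := by omega
  have h1 := h (x - (j - k₀)) hk
  have hx : j - k₀ + (x - (j - k₀)) = x := by omega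
  rw [hx] at h1
  have h2 : ((a (x - (j - k₀)) : ℤ) : ℝ) - (a k₀ : ℝ) ≤ (M : ℝ) := by
    exact_mod_cast hM (x - (j - k₀)) hk k₀ hk₀n
  linarith

/-- If `a` has amplitude at most `M` and `j₀ < j₁` is a pair of neighbouring connected
coordinates of a tropical recurrent sequence `z` satisfying `a`, then
`|z j₀ - z j₁| ≤ 2M`. -/
theorem neighbouring_connected_diff_le (n : ℕ) (a : ℕ → ℤ) (M : ℤ)
    (hM : ∀ i ≤ n, ∀ i' ≤ n, a i - a i' ≤ M) (z : ℕ → ℝ)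
    (hz : TropRecSeq n a z) (j₀ j₁ : ℕ) (hlt : j₀ < j₁)
    (hc₀ : ConnectedCoord n a z j₀) (hc₁ : ConnectedCoord n a z j₁)
    (hnb : ∀ j, j₀ < j → j < j₁ → ¬ ConnectedCoord n a z j) :
    |z j₀ - z j₁| ≤ 2 * (M : ℝ) := by
  obtain ⟨k₀, hk₀j, hk₀n, h₀⟩ := hc₀
  obtain ⟨k₁, hk₁j, hk₁n, h₁⟩ := hc₁
  have hM0 : (0 : ℝ) ≤ (M : ℝ) := by
    have := hM 0 (Nat.zero_le n) 0 (Nat.zero_le n)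
    exact_mod_cast (by omega : (0 : ℤ) ≤ M)
  -- Step 1: a min position of the window at j₀ that is ≥ j₁
  obtain ⟨i₁, i₂, hi₁n, hi₂n, hne, hmin₁, hmin₂⟩ := hz j₀
  have step1 : ∃ i, i ≤ n ∧ j₁ ≤ j₀ + i ∧
      (∀ k ≤ n, z (j₀ + i) + (a i : ℝ) ≤ z (j₀ + k) + (a k : ℝ)) := by
    have key : ∀ i, i ≤ n → i ≠ 0 →
        (∀ k ≤ n, z (j₀ + i) + (a i : ℝ) ≤ z (j₀ + k) + (a k : ℝ)) →
        j₁ ≤ j₀ + i := by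
      intro i hin hi0 hmin
      by_contra hcon
      exact hnb (j₀ + i) (by omega) (by omega)
        (min_pos_connected n a z j₀ i hin hmin)
    by_cases h10 : i₁ = 0
    · have h20 : i₂ ≠ 0 := by
        intro h; exact hne (by omega)
      exact ⟨i₂, hi₂n, key i₂ hi₂n h20 hmin₂, hmin₂⟩
    · exact ⟨i₁, hi₁n, key i₁ hi₁n h10 hmin₁, hmin₁⟩
  obtain ⟨i, hin, him, hmin⟩ := step1
  have hj₁n : j₁ ≤ j₀ + n := le_trans him (by omega)
  have hm0 : z (j₀ + i) ≤ z j₀ + (M : ℝ) := by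
    have h1 := hmin 0 (Nat.zero_le n)
    have h2 : ((a 0 : ℤ) : ℝ) - (a i : ℝ) ≤ (M : ℝ) := by
      exact_mod_cast hM 0 (Nat.zero_le n) i hin
    simp only [Nat.add_zero] at h1
    linarith
  -- Step 2: z j₁ ≤ z j₀ + 2M
  have step2 : z j₁ ≤ z j₀ + 2 * (M : ℝ) := by
    by_cases hs₁ : j₁ - k₁ ≤ j₀
    · have := conn_le n a M hM z j₁ k₁ hk₁j hk₁n h₁ j₀ hs₁ (by omega)
      linarith
    · have := conn_le n a M hM z j₁ k₁ hk₁j hk₁n h₁ (j₀ + i)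
        (by omega) (by omega)
      linarith
  -- Step 3: z j₀ ≤ z j₁ + 2M
  have step3 : z j₀ ≤ z j₁ + 2 * (M : ℝ) := by
    by_cases hreach : j₁ ≤ j₀ - k₀ + n
    · have := conn_le n a M hM z j₀ k₀ hk₀j hk₀n h₀ j₁ (by omega) hreach
      linarith
    · -- the witness window of j₀ does not reach j₁; use the window at s = j₁ - n
      have hn1 : n < j₁ := by omega
      set s := j₁ - n with hs
      have hsj₀ : s ≤ j₀ := by omega
      have hss₀ : j₀ - k₀ < s := by omega
      obtain ⟨l₁, l₂, hl₁n, hl₂n, hlne, hlmin₁, hlmin₂⟩ := hz s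
      have key : ∀ l, l ≤ n → l ≠ n →
          (∀ k ≤ n, z (s + l) + (a l : ℝ) ≤ z (s + k) + (a k : ℝ)) →
          s + l ≤ j₀ := by
        intro l hln hlnn hlmin
        by_contra hcon
        exact hnb (s + l) (by omega) (by omega)
          (min_pos_connected n a z s l hln hlmin)
      have hexists : ∃ l, l ≤ n ∧ s + l ≤ j₀ ∧
          (∀ k ≤ n, z (s + l) + (a l : ℝ) ≤ z (s + k) + (a k : ℝ)) := by
        by_cases h1n : l₁ = n
        · have h2n : l₂ ≠ n := fun h => hlne (by omega)
          exact ⟨l₂, hl₂n, key l₂ hl₂n h2n hlmin₂, hlmin₂⟩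
        · exact ⟨l₁, hl₁n, key l₁ hl₁n h1n hlmin₁, hlmin₁⟩
      obtain ⟨l, hln, hpj₀, hlmin⟩ := hexists
      have hsn : s + n = j₁ := by omega
      have hp1 : z (s + l) ≤ z j₁ + (M : ℝ) := by
        have h1 := hlmin n (le_refl n)
        rw [hsn] at h1
        have h2 : ((a n : ℤ) : ℝ) - (a l : ℝ) ≤ (M : ℝ) := by
          exact_mod_cast hM n (le_refl n) l hln
        linarith
      have hp2 : z j₀ ≤ z (s + l) + (M : ℝ) :=
        conn_le n a M hM z j₀ k₀ hk₀j hk₀n h₀ (s + l) (by omega) (by omega)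
      linarith
  rw [abs_sub_le_iff]
  constructor <;> linarith
end

section
/- Let a = (a_0,…,a_n) ∈ ℤ^{n+1} with amplitude at most M, and let z = (z_0, z_1, …) be a tropical recurrent sequence satisfying a. If j and s are both connected coordinates of z, then z_s ≤ z_j + 2M·|s − j|. -/
/-- The minimum of the window starting at `t`. -/
noncomputable def mwin (n : ℕ) (a : ℕ → ℤ) (z : ℕ → ℝ) (t : ℕ) : ℝ :=
  (Finset.range (n + 1)).inf' (by simp) (fun i => z (t + i) + (a i : ℝ))

lemma mwin_le (n : ℕ) (a : ℕ → ℤ) (z : ℕ → ℝ) (t : ℕ) {i : ℕ} (hi : i ≤ n) :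
    mwin n a z t ≤ z (t + i) + (a i : ℝ) :=
  Finset.inf'_le _ (Finset.mem_range.mpr (by omega))

lemma le_mwin (n : ℕ) (a : ℕ → ℤ) (z : ℕ → ℝ) (t : ℕ) {c : ℝ}
    (h : ∀ i ≤ n, c ≤ z (t + i) + (a i : ℝ)) : c ≤ mwin n a z t :=
  Finset.le_inf' _ _ (fun i hi => h i (by have := Finset.mem_range.mp hi; omega))

lemma step_up (n : ℕ) (a : ℕ → ℤ) (M : ℤ)
    (hM : ∀ i ≤ n, ∀ i' ≤ n, a i - a i' ≤ M) (z : ℕ → ℝ)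
    (hz : TropRecSeq n a z) (t : ℕ) :
    mwin n a z (t + 1) ≤ mwin n a z t + (M : ℝ) := by
  obtain ⟨i₁, i₂, h1, h2, hne, p1, p2⟩ := hz t
  obtain ⟨i, hi1, hin, hp⟩ : ∃ i, 1 ≤ i ∧ i ≤ n ∧
      ∀ k ≤ n, z (t + i) + (a i : ℝ) ≤ z (t + k) + (a k : ℝ) := by
    rcases Nat.eq_zero_or_pos i₁ with h | h
    · exact ⟨i₂, by omega, h2, p2⟩
    · exact ⟨i₁, h, h1, p1⟩
  have key : mwin n a z (t + 1) ≤ z ((t + 1) + (i - 1)) + (a (i - 1) : ℝ) :=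
    mwin_le n a z (t + 1) (by omega)
  rw [show (t + 1) + (i - 1) = t + i by omega] at key
  have h1' : z (t + i) + (a i : ℝ) ≤ mwin n a z t := le_mwin n a z t hp
  have h2' : (a (i - 1) : ℤ) - a i ≤ M := hM _ (by omega) _ hin
  have h2'' : ((a (i - 1) : ℤ) : ℝ) - ((a i : ℤ) : ℝ) ≤ (M : ℝ) := by
    exact_mod_cast sub_le_iff_le_add'.mpr (by exact_mod_cast (by linarith : (a (i-1) : ℤ) ≤ a i + M))
  linarith

lemma step_down (n : ℕ) (a : ℕ → ℤ) (M : ℤ)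
    (hM : ∀ i ≤ n, ∀ i' ≤ n, a i - a i' ≤ M) (z : ℕ → ℝ)
    (hz : TropRecSeq n a z) (t : ℕ) :
    mwin n a z t ≤ mwin n a z (t + 1) + (M : ℝ) := by
  obtain ⟨i₁, i₂, h1, h2, hne, p1, p2⟩ := hz (t + 1)
  obtain ⟨i, hin, hp⟩ : ∃ i, i + 1 ≤ n ∧
      ∀ k ≤ n, z (t + 1 + i) + (a i : ℝ) ≤ z (t + 1 + k) + (a k : ℝ) := by
    rcases eq_or_ne i₁ n with h | h
    · exact ⟨i₂, by omega, p2⟩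
    · exact ⟨i₁, by omega, p1⟩
  have key : mwin n a z t ≤ z (t + (i + 1)) + (a (i + 1) : ℝ) :=
    mwin_le n a z t (by omega)
  rw [show t + (i + 1) = t + 1 + i by omega] at key
  have h1' : z (t + 1 + i) + (a i : ℝ) ≤ mwin n a z (t + 1) := le_mwin n a z (t + 1) hp
  have h2' : (a (i + 1) : ℤ) - a i ≤ M := hM _ hin _ (by omega)
  have h2'' : ((a (i + 1) : ℤ) : ℝ) - ((a i : ℤ) : ℝ) ≤ (M : ℝ) := by exact_mod_cast h2'
  linarith

lemma chain_up (n : ℕ) (a : ℕ → ℤ) (M : ℤ)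
    (hM : ∀ i ≤ n, ∀ i' ≤ n, a i - a i' ≤ M) (z : ℕ → ℝ)
    (hz : TropRecSeq n a z) (d t : ℕ) :
    mwin n a z (t + d) ≤ mwin n a z t + (M : ℝ) * d := by
  induction d with
  | zero => simp
  | succ d ih =>
    have := step_up n a M hM z hz (t + d)
    rw [show t + d + 1 = t + (d + 1) by omega] at this
    push_cast
    push_cast at ih
    linarith

lemma chain_down (n : ℕ) (a : ℕ → ℤ) (M : ℤ)
    (hM : ∀ i ≤ n, ∀ i' ≤ n, a i - a i' ≤ M) (z : ℕ → ℝ)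
    (hz : TropRecSeq n a z) (d t : ℕ) :
    mwin n a z t ≤ mwin n a z (t + d) + (M : ℝ) * d := by
  induction d with
  | zero => simp
  | succ d ih =>
    have := step_down n a M hM z hz (t + d)
    rw [show t + d + 1 = t + (d + 1) by omega] at this
    push_cast
    push_cast at ih
    linarith

/-- If `a` has amplitude at most `M` and `j`, `s` are connected coordinates of a
tropical recurrent sequence `z` satisfying `a`, then `z s ≤ z j + 2M|s - j|`. -/
theorem connected_upper_growth (n : ℕ) (a : ℕ → ℤ) (M : ℤ)
    (hM : ∀ i ≤ n, ∀ i' ≤ n, a i - a i' ≤ M) (z : ℕ → ℝ)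
    (hz : TropRecSeq n a z) (j s : ℕ)
    (hcj : ConnectedCoord n a z j) (hcs : ConnectedCoord n a z s) :
    z s ≤ z j + 2 * (M : ℝ) * |(s : ℝ) - (j : ℝ)| := by
  -- n ≥ 1
  have hn : 1 ≤ n := by
    obtain ⟨i₁, i₂, h1, h2, hne, -, -⟩ := hz 0
    omega
  -- M ≥ 0
  have hM0 : (0 : ℝ) ≤ (M : ℝ) := by
    have h := hM 0 (by omega) 0 (by omega)
    exact_mod_cast (by omega : (0 : ℤ) ≤ M)
  obtain ⟨l, hls, hln, hl⟩ := hcs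
  -- z s ≤ mwin (s - l) - a l
  have hzs : z s + (a l : ℝ) ≤ mwin n a z (s - l) := by
    apply le_mwin
    intro i hi
    exact hl i hi
  -- z j lower bound from any valid window t
  have hzj : ∀ t, t ≤ j → j ≤ t + n → mwin n a z t ≤ z j + (a (j - t) : ℝ) := by
    intro t h1 h2
    have := mwin_le n a z t (i := j - t) (by omega)
    rwa [show t + (j - t) = j by omega] at this
  have habs : ∀ i ≤ n, ∀ i' ≤ n, ((a i : ℝ)) - (a i' : ℝ) ≤ (M : ℝ) := by
    intro i hi i' hi'
    exact_mod_cast hM i hi i' hi'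
  rcases le_or_gt j (s - l) with hA | hB
  · -- Case A : t = j
    set d := s - l - j with hd
    have hchain := chain_up n a M hM z hz d j
    rw [show j + d = s - l by omega] at hchain
    have hj' := hzj j le_rfl (by omega)
    simp only [Nat.sub_self] at hj'
    have ha : (a 0 : ℝ) - (a l : ℝ) ≤ (M : ℝ) := habs 0 (by omega) l hln
    rcases eq_or_ne s j with rfl | hne
    · -- l = 0, d = 0
      have hl0 : l = 0 := by omega
      have hd0 : d = 0 := by omega
      subst hl0
      rw [hd0] at hchain
      simp at hchain
      simp only [sub_self, abs_zero]
      linarith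
    · have hsj : j + 1 ≤ s := by omega
      have hjr : (j : ℝ) + 1 ≤ s := by exact_mod_cast hsj
      have habs' : |(s : ℝ) - (j : ℝ)| = (s : ℝ) - (j : ℝ) :=
        abs_of_nonneg (by linarith)
      have hdle : (d : ℝ) ≤ (s : ℝ) - (j : ℝ) := by
        have : d ≤ s - j := by omega
        have h2 : ((s - j : ℕ) : ℝ) = (s : ℝ) - j := by
          rw [Nat.cast_sub (by omega)]
        calc (d : ℝ) ≤ ((s - j : ℕ) : ℝ) := by exact_mod_cast this
          _ = (s : ℝ) - j := h2
      have hone : (1 : ℝ) ≤ (s : ℝ) - (j : ℝ) := by linarith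
      rw [habs']
      nlinarith [mul_le_mul_of_nonneg_left hdle hM0, mul_le_mul_of_nonneg_left hone hM0]
  · rcases le_or_gt j (s - l + n) with hB1 | hC
    · -- Case B : t = s - l
      have hj' := hzj (s - l) (by omega) hB1
      have ha : (a (j - (s - l)) : ℝ) - (a l : ℝ) ≤ (M : ℝ) :=
        habs _ (by omega) l hln
      rcases eq_or_ne s j with heq | hne
      · rw [show j - (s - l) = l from by omega] at hj'
        rw [show |(s : ℝ) - (j : ℝ)| = 0 from by rw [heq]; simp]
        linarith
      · have hone : (1 : ℝ) ≤ |(s : ℝ) - (j : ℝ)| := by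
          rcases lt_or_gt_of_ne hne with h | h
          · have h' : (s : ℝ) + 1 ≤ j := by exact_mod_cast h
            rw [abs_of_nonpos (by linarith)]
            linarith
          · have h' : (j : ℝ) + 1 ≤ s := by exact_mod_cast h
            rw [abs_of_nonneg (by linarith)]
            linarith
        nlinarith [mul_le_mul_of_nonneg_left hone hM0]
    · -- Case C : t = j - n, with s - l + n < j
      have hjs : s + 1 ≤ j := by omega
      set d := j - n - (s - l) with hd
      have hchain := chain_down n a M hM z hz d (s - l)
      rw [show s - l + d = j - n by omega] at hchain
      have hj' := hzj (j - n) (by omega) (by omega)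
      rw [show j - (j - n) = n from by omega] at hj'
      have ha : (a n : ℝ) - (a l : ℝ) ≤ (M : ℝ) := habs n le_rfl l hln
      have hsr : (s : ℝ) + 1 ≤ j := by exact_mod_cast hjs
      have habs' : |(s : ℝ) - (j : ℝ)| = (j : ℝ) - (s : ℝ) := by
        rw [abs_of_nonpos (by linarith)]
        ring
      rw [habs']
      -- real facts
      have hD : (n : ℝ) - l + 1 ≤ (j : ℝ) - s := by
        have : s - l + n + 1 ≤ j := by omega
        have h2 : s + (n - l) + 1 ≤ j := by omega
        have h3 : ((s + (n - l) + 1 : ℕ) : ℝ) ≤ (j : ℝ) := by exact_mod_cast h2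
        push_cast [Nat.cast_sub hln] at h3
        linarith
      have hdr : (d : ℝ) = (j : ℝ) - n - ((s : ℝ) - l) := by
        have h1 : s - l + d + n = j := by omega
        have h2 : ((s - l + d + n : ℕ) : ℝ) = (j : ℝ) := by exact_mod_cast h1
        push_cast [Nat.cast_sub hls] at h2
        linarith
      rw [hdr] at hchain
      have hnl : (l : ℝ) ≤ (n : ℝ) := by exact_mod_cast hln
      nlinarith
end

section
/- Let a = (a_0,…,a_n) ∈ ℤ^{n+1} with amplitude at most M, and let z = (z_0, z_1, …) be a tropical recurrent sequence satisfying a. If j is a connected coordinate of z, then for every coordinate s it holds that z_s ≥ z_j − 2M·max(|s − j|, n). -/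
lemma trop_step_right (n : ℕ) (a : ℕ → ℤ) (M : ℤ)
    (hM : ∀ i ≤ n, ∀ i' ≤ n, a i - a i' ≤ M) (z : ℕ → ℝ)
    (hz : TropRecSeq n a z) (q : ℕ) (B : ℝ)
    (hB : ∀ i ≤ n, B ≤ z (q + i) + (a i : ℝ)) :
    ∀ i ≤ n, B - (M : ℝ) ≤ z (q + 1 + i) + (a i : ℝ) := by
  obtain ⟨i₁, i₂, h1, h2, hne, hm1, hm2⟩ := hz (q + 1)
  -- choose a minimizer i* < n
  obtain ⟨i', hi'n, hmin⟩ : ∃ i', i' < n ∧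
      ∀ i ≤ n, z (q + 1 + i') + (a i' : ℝ) ≤ z (q + i + 1) + (a i : ℝ) := by
    rcases lt_or_gt_of_ne hne with h | h
    · exact ⟨i₁, lt_of_lt_of_le h h2, fun i hi => by
        have := hm1 i hi; rwa [show q + 1 + i = q + i + 1 by ring] at this⟩
    · exact ⟨i₂, lt_of_lt_of_le h h1, fun i hi => by
        have := hm2 i hi; rwa [show q + 1 + i = q + i + 1 by ring] at this⟩
  intro i hi
  have h1 : B ≤ z (q + (i' + 1)) + (a (i' + 1) : ℝ) := hB (i' + 1) (by omega)
  have h2 : z (q + 1 + i') + (a i' : ℝ) ≤ z (q + i + 1) + (a i : ℝ) := hmin i hi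
  have h3 : (a (i' + 1) : ℤ) - a i' ≤ M := hM (i' + 1) (by omega) i' (by omega)
  have h3' : (a (i' + 1) : ℝ) - (a i' : ℝ) ≤ (M : ℝ) := by exact_mod_cast h3
  have he : q + (i' + 1) = q + 1 + i' := by ring
  have he2 : q + i + 1 = q + 1 + i := by ring
  rw [he] at h1; rw [he2] at h2
  linarith

lemma trop_step_left (n : ℕ) (a : ℕ → ℤ) (M : ℤ)
    (hM : ∀ i ≤ n, ∀ i' ≤ n, a i - a i' ≤ M) (z : ℕ → ℝ)
    (hz : TropRecSeq n a z) (q : ℕ) (B : ℝ)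
    (hB : ∀ i ≤ n, B ≤ z (q + 1 + i) + (a i : ℝ)) :
    ∀ i ≤ n, B - (M : ℝ) ≤ z (q + i) + (a i : ℝ) := by
  obtain ⟨i₁, i₂, h1, h2, hne, hm1, hm2⟩ := hz q
  -- choose a minimizer i* ≥ 1
  obtain ⟨i', hi'1, hi'n, hmin⟩ : ∃ i', 1 ≤ i' ∧ i' ≤ n ∧
      ∀ i ≤ n, z (q + i') + (a i' : ℝ) ≤ z (q + i) + (a i : ℝ) := by
    rcases lt_or_gt_of_ne hne with h | h
    · exact ⟨i₂, by omega, h2, hm2⟩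
    · exact ⟨i₁, by omega, h1, hm1⟩
  intro i hi
  have h1 : B ≤ z (q + 1 + (i' - 1)) + (a (i' - 1) : ℝ) := hB (i' - 1) (by omega)
  have h2 : z (q + i') + (a i' : ℝ) ≤ z (q + i) + (a i : ℝ) := hmin i hi
  have h3 : (a (i' - 1) : ℤ) - a i' ≤ M := hM (i' - 1) (by omega) i' hi'n
  have h3' : (a (i' - 1) : ℝ) - (a i' : ℝ) ≤ (M : ℝ) := by exact_mod_cast h3
  have he : q + 1 + (i' - 1) = q + i' := by omega
  rw [he] at h1
  linarith

/-- If `a` has amplitude at most `M` and `j` is a connected coordinate of a tropical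
recurrent sequence `z` satisfying `a`, then for every coordinate `s` one has
`z s ≥ z j - 2M·max(|s - j|, n)`. -/
theorem connected_lower_growth (n : ℕ) (a : ℕ → ℤ) (M : ℤ)
    (hM : ∀ i ≤ n, ∀ i' ≤ n, a i - a i' ≤ M) (z : ℕ → ℝ)
    (hz : TropRecSeq n a z) (j : ℕ) (hcj : ConnectedCoord n a z j) (s : ℕ) :
    z j - 2 * (M : ℝ) * max |(s : ℝ) - (j : ℝ)| (n : ℝ) ≤ z s := by
  -- n ≥ 1
  have hn : 1 ≤ n := by
    by_contra h
    obtain ⟨i₁, i₂, h1, h2, hne, -, -⟩ := hz 0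
    omega
  have hM0 : (0 : ℤ) ≤ M := by have := hM 0 (by omega) 0 (by omega); omega
  have hM0' : (0 : ℝ) ≤ (M : ℝ) := by exact_mod_cast hM0
  obtain ⟨k₀, hk₀j, hk₀n, hconn⟩ := hcj
  set p := j - k₀ with hp
  have hpj : p + k₀ = j := by omega
  set m0 : ℝ := z j + (a k₀ : ℝ) with hm0
  have base : ∀ i ≤ n, m0 ≤ z (p + i) + (a i : ℝ) := by
    intro i hi
    have := hconn i hi
    rwa [hp] at this
  -- rightward propagation
  have right : ∀ t : ℕ, ∀ i ≤ n, m0 - (M : ℝ) * t ≤ z (p + t + i) + (a i : ℝ) := by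
    intro t
    induction t with
    | zero => simpa using base
    | succ t ih =>
      intro i hi
      have := trop_step_right n a M hM z hz (p + t) (m0 - (M : ℝ) * t) ih i hi
      have he : p + t + 1 + i = p + (t + 1) + i := by ring
      rw [he] at this
      push_cast at this ⊢
      linarith
  -- leftward propagation
  have left : ∀ t : ℕ, t ≤ p → ∀ i ≤ n, m0 - (M : ℝ) * t ≤ z (p - t + i) + (a i : ℝ) := by
    intro t
    induction t with
    | zero => intro _; simpa using base
    | succ t ih =>
      intro ht i hi
      have ih' := ih (by omega)
      have hq : p - t = (p - (t + 1)) + 1 := by omega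
      rw [hq] at ih'
      have := trop_step_left n a M hM z hz (p - (t + 1)) (m0 - (M : ℝ) * t) ih' i hi
      push_cast at this ⊢
      linarith
  -- bound the amplitude term
  have hamp : ∀ i ≤ n, (a k₀ : ℝ) - (a i : ℝ) ≥ -(M : ℝ) := by
    intro i hi
    have := hM i hi k₀ hk₀n
    have : (a i : ℝ) - (a k₀ : ℝ) ≤ (M : ℝ) := by exact_mod_cast this
    linarith
  set mx : ℝ := max |(s : ℝ) - (j : ℝ)| (n : ℝ) with hmx
  have hmx1 : (1 : ℝ) ≤ mx := le_trans (by exact_mod_cast hn) (le_max_right _ _)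
  -- key: exhibit T : ℕ with z s ≥ m0 - M*T - a i for suitable i, T ≤ mx
  have key : ∃ T : ℕ, (T : ℝ) ≤ mx ∧ z j - (M : ℝ) - (M : ℝ) * T ≤ z s := by
    rcases le_or_gt p s with hps | hps
    · rcases le_or_gt s (p + n) with hsn | hsn
      · refine ⟨0, by simpa using le_trans zero_le_one hmx1, ?_⟩
        have h := base (s - p) (by omega)
        rw [show p + (s - p) = s by omega] at h
        have := hamp (s - p) (by omega)
        simp only [hm0] at h
        push_cast
        linarith
      · refine ⟨s - p - n, ?_, ?_⟩
        · have h1 : s - p - n ≤ s - j := by omega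
          have hjs : j ≤ s := by omega
          have h2 : ((s - j : ℕ) : ℝ) ≤ |(s : ℝ) - (j : ℝ)| := by
            rw [Nat.cast_sub hjs]; exact le_abs_self _
          calc ((s - p - n : ℕ) : ℝ) ≤ ((s - j : ℕ) : ℝ) := by exact_mod_cast h1
            _ ≤ |(s : ℝ) - (j : ℝ)| := h2
            _ ≤ mx := le_max_left _ _
        · have h := right (s - p - n) n le_rfl
          rw [show p + (s - p - n) + n = s by omega] at h
          have := hamp n le_rfl
          simp only [hm0] at h
          linarith
    · refine ⟨p - s, ?_, ?_⟩
      · have h1 : p - s ≤ j - s := by omega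
        have hsj : s ≤ j := by omega
        have h2 : ((j - s : ℕ) : ℝ) ≤ |(s : ℝ) - (j : ℝ)| := by
          rw [Nat.cast_sub hsj, abs_sub_comm]; exact le_abs_self _
        calc ((p - s : ℕ) : ℝ) ≤ ((j - s : ℕ) : ℝ) := by exact_mod_cast h1
          _ ≤ |(s : ℝ) - (j : ℝ)| := h2
          _ ≤ mx := le_max_left _ _
      · have h := left (p - s) (by omega) 0 (by omega)
        rw [show p - (p - s) + 0 = s by omega] at h
        have := hamp 0 (by omega)
        simp only [hm0] at h
        linarith
  obtain ⟨T, hT, hzs⟩ := key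
  have hT0 : (0 : ℝ) ≤ (T : ℝ) := Nat.cast_nonneg _
  have e1 : (M : ℝ) * (T : ℝ) ≤ (M : ℝ) * mx := mul_le_mul_of_nonneg_left hT hM0'
  have e2 : (M : ℝ) * 1 ≤ (M : ℝ) * mx := mul_le_mul_of_nonneg_left hmx1 hM0'
  nlinarith [e1, e2]
end

section
/- Let a = (a_0,…,a_n) ∈ ℤ^{n+1} with amplitude at most M, and let z = (z_0, z_1, …) be a tropical recurrent sequence satisfying a. If for some s ≥ 0 there exists s_0 with s ≤ s_0 < s + n such that z_{s+n} > (min_{s_0 ≤ k < s+n} z_k) + 2Mn, then the coordinate s + n of z is disconnected. -/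
/-- If `a` has amplitude at most `M`, `z` is a tropical recurrent sequence satisfying
`a`, and for some `s ≤ s₀ < s + n` one has
`z (s + n) > (min_{s₀ ≤ k < s + n} z k) + 2Mn`, then the coordinate `s + n` of `z`
is disconnected. -/
theorem big_jump_disconnected (n : ℕ) (a : ℕ → ℤ) (M : ℤ)
    (hM : ∀ i ≤ n, ∀ i' ≤ n, a i - a i' ≤ M) (z : ℕ → ℝ)
    (hz : TropRecSeq n a z) (s s₀ : ℕ) (hs₀ : s ≤ s₀) (hs₁ : s₀ < s + n)
    (hbig : sInf (z '' {k : ℕ | s₀ ≤ k ∧ k < s + n}) + 2 * (M : ℝ) * (n : ℝ)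
      < z (s + n)) :
    ¬ ConnectedCoord n a z (s + n) := by
  rintro ⟨k₀, hk₀j, hk₀n, hconn⟩
  have hn : 1 ≤ n := by omega
  have hM0 : (0:ℤ) ≤ M := by have := hM 0 (Nat.zero_le n) 0 (Nat.zero_le n); omega
  have hM0' : (0:ℝ) ≤ (M:ℝ) := by exact_mod_cast hM0
  -- Connectedness gives a bound on the window [s+n-k₀, s+2n-k₀]
  have hA : ∀ m, s + n - k₀ ≤ m → m ≤ s + 2*n - k₀ → z (s+n) ≤ z m + M := by
    intro m h1 h2
    have hk : m - (s + n - k₀) ≤ n := by omega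
    have hcon := hconn (m - (s + n - k₀)) hk
    have hm : s + n - k₀ + (m - (s + n - k₀)) = m := by omega
    rw [hm] at hcon
    have hMk : (a (m - (s + n - k₀)) : ℝ) - (a k₀ : ℝ) ≤ (M:ℝ) := by
      exact_mod_cast hM _ hk k₀ hk₀n
    linarith
  -- Propagate the bound down to s₀ using the tropical recurrence
  have hB : ∀ t, ∀ m, s₀ ≤ m → m + t = s + n - k₀ →
      z (s+n) ≤ z m + ((t:ℝ)+1) * (M:ℝ) := by
    intro t
    induction t using Nat.strong_induction_on with
    | _ t ih =>
      intro m hm hmt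
      rcases Nat.eq_zero_or_pos t with h0 | hpos
      · subst h0
        have := hA m (by omega) (by omega)
        push_cast
        linarith
      · obtain ⟨i₁, i₂, hi₁, hi₂, hne, hmin1, hmin2⟩ := hz m
        obtain ⟨i, hi, hipos, hmini⟩ : ∃ i, i ≤ n ∧ 1 ≤ i ∧
            ∀ i' ≤ n, z (m+i) + (a i : ℝ) ≤ z (m+i') + (a i' : ℝ) := by
          rcases Nat.eq_zero_or_pos i₁ with h | h
          · exact ⟨i₂, hi₂, by omega, hmin2⟩
          · exact ⟨i₁, hi₁, h, hmin1⟩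
        have hstep : z (m+i) ≤ z m + (M:ℝ) := by
          have h0 := hmini 0 (Nat.zero_le n)
          have hMa : (a 0 : ℝ) - (a i : ℝ) ≤ (M:ℝ) := by
            exact_mod_cast hM 0 (Nat.zero_le n) i hi
          simp only [Nat.add_zero] at h0
          linarith
        have ht1 : (1:ℝ) ≤ (t:ℝ) := by exact_mod_cast hpos
        by_cases hc : s + n - k₀ ≤ m + i
        · have := hA (m+i) hc (by omega)
          nlinarith [hM0']
        · have hti : i ≤ t := by omega
          have hih := ih (t - i) (by omega) (m+i) (by omega) (by omega)
          have hcast : ((t - i : ℕ):ℝ) = (t:ℝ) - (i:ℝ) := by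
            push_cast [hti]; ring
          rw [hcast] at hih
          have hi1 : (1:ℝ) ≤ (i:ℝ) := by exact_mod_cast hipos
          nlinarith [hM0']
  -- Conclude
  have hle : z (s+n) - 2*(M:ℝ)*(n:ℝ) ≤ sInf (z '' {k : ℕ | s₀ ≤ k ∧ k < s + n}) := by
    refine le_csInf ⟨z s₀, ⟨s₀, ⟨le_refl _, by omega⟩, rfl⟩⟩ ?_
    rintro b ⟨m, ⟨hm1, hm2⟩, rfl⟩
    have hn1 : (1:ℝ) ≤ (n:ℝ) := by exact_mod_cast hn
    by_cases hc : s + n - k₀ ≤ m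
    · have := hA m hc (by omega)
      nlinarith [hM0']
    · have := hB (s + n - k₀ - m) m hm1 (by omega)
      have ht : ((s + n - k₀ - m : ℕ):ℝ) + 1 ≤ 2*(n:ℝ) := by
        have h1 : s + n - k₀ - m + 1 ≤ 2*n := by omega
        exact_mod_cast h1
      nlinarith [hM0']
  linarith
end

section
/- For the vector a = (0, 1, 0) ∈ ℤ³ the tropical entropy equals H(a) = 1/4; hence the lower bound H ≥ 1/4 for non-regular integer vectors is sharp. -/
open Filter Topology

/-- `D(s) ⊆ ℝ^s`: the set of finite sequences `(y_0, …, y_{s-1})` satisfying the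
vector `a = (a_0, …, a_n)`, i.e. for every window `j` with `j + n < s` the minimum
`min_{0 ≤ i ≤ n} (y_{j+i} + a_i)` is attained at least twice. -/
def tropD (n : ℕ) (a : ℕ → ℤ) (s : ℕ) : Set (Fin s → ℝ) :=
  {y | ∀ j : ℕ, j + n < s →
    TropWindow n a (fun k => if h : k < s then y ⟨k, h⟩ else 0) j}

/-- The tropical Hilbert function `d(s) := dim D(s)` (the Hausdorff dimension of the
finite union of polyhedra `D(s)`). -/
noncomputable def tropHilbert (n : ℕ) (a : ℕ → ℤ) (s : ℕ) : ℝ :=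
  (dimH (tropD n a s)).toReal

/-!
For `a = (0, 1, 0)` the window `(z j, z (j + 1) + 1, z (j + 2))` attains its minimum twice
only if `z j = z (j + 2)`, or the minimum sits exactly at the first two entries (`MinAt01`), or
exactly at the last two (`MinAt12`). Windows of the last two kinds are never adjacent, so
there are at most `(s - 1) / 2` of them and one kind occurs at most `(s - 1) / 4` times.
Scanning from the left (few `MinAt01`) or from the right (few `MinAt12`), every coordinate is
then an integer translate of one of at most `2 + (s - 1) / 4` free coordinates, so `D(s)` is a
countable union of smooth images of `ℝ^(2 + (s - 1) / 4)`. Conversely, odd coordinates `0`,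
coordinates `≡ 2 mod 4` equal to `1` and arbitrary values `> 1` at multiples of `4` give an
open family of dimension `⌈s / 4⌉` inside `D(s)`.
-/

open Set

theorem WellFounded.exists_mem_add_int {α : Type*} {r : α → α → Prop} (hr : WellFounded r)
    {z : α → ℝ} {F : Finset α} (hstep : ∀ k ∉ F, ∃ i, r i k ∧ ∃ n : ℤ, z k = z i + n)
    (k : α) : ∃ f ∈ F, ∃ n : ℤ, z k = z f + n := by
  induction k using hr.induction with
  | _ k ih =>
    by_cases hk : k ∈ F
    · exact ⟨k, hk, 0, by simp⟩
    obtain ⟨i, hik, n, hn⟩ := hstep k hk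
    obtain ⟨f, hf, m, hm⟩ := ih i hik
    exact ⟨f, hf, m + n, by rw [hn, hm]; push_cast; ring⟩

theorem dimH_le_of_forall_exists_finset_add_int {ι : Type*} [Fintype ι] {S : Set (ι → ℝ)}
    {N : ℕ} (h : ∀ y ∈ S, ∃ F : Finset ι, F.card ≤ N ∧ ∀ k, ∃ f ∈ F, ∃ n : ℤ, y k = y f + n) :
    dimH S ≤ N := by
  let param (F : Finset ι) (σ : ι → F) (ν : ι → ℤ) : (F → ℝ) → (ι → ℝ) :=
    fun x k => x (σ k) + ν k
  have hcover : S ⊆ ⋃ (F : {F : Finset ι // F.card ≤ N}) (σ : ι → F.1) (ν : ι → ℤ),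
      range (param F σ ν) := by
    intro y hy
    obtain ⟨F, hF, hgen⟩ := h y hy
    choose σ hσ ν hν using hgen
    simp only [mem_iUnion]
    exact ⟨⟨F, hF⟩, fun k => ⟨σ k, hσ k⟩, ν, fun f => y f, funext fun k => (hν k).symm⟩
  refine (dimH_mono hcover).trans ?_
  simp only [dimH_iUnion, iSup_le_iff]
  intro F σ ν
  have hsmooth : ContDiff ℝ 1 (param F σ ν) := by fun_prop
  calc dimH (range (param F σ ν)) ≤ Module.finrank ℝ (F.1 → ℝ) := hsmooth.dimH_range_le
    _ ≤ N := by
      rw [Module.finrank_fintype_fun_eq_card, Fintype.card_coe]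
      exact_mod_cast F.2

theorem Finset.card_le_half_of_succ_notMem {n : ℕ} {S : Finset ℕ} (hS : S ⊆ Finset.range n)
    (hsucc : ∀ j ∈ S, j + 1 ∉ S) : S.card ≤ (n + 1) / 2 := by
  -- halving is injective on a set without two consecutive elements
  calc S.card ≤ (Finset.range ((n + 1) / 2)).card := by
        refine Finset.card_le_card_of_injOn (· / 2) (fun j hj => ?_) (fun j hj j' hj' he => ?_)
        · have := Finset.mem_range.1 (hS hj)
          simp only [Finset.coe_range, Set.mem_Iio]
          omega
        · by_contra hne
          rcases (by simp only at he; omega : j' = j + 1 ∨ j = j' + 1) with rfl | rfl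
          · exact hsucc j hj hj'
          · exact hsucc j' hj' hj
    _ = (n + 1) / 2 := Finset.card_range _

def a010 : ℕ → ℤ := fun i => if i = 1 then 1 else 0

def MinAt01 (z : ℕ → ℝ) (j : ℕ) : Prop := z j = z (j + 1) + 1 ∧ z j < z (j + 2)

def MinAt12 (z : ℕ → ℝ) (j : ℕ) : Prop := z (j + 2) = z (j + 1) + 1 ∧ z (j + 2) < z j

theorem tropWindow_a010 {z : ℕ → ℝ} {j : ℕ} (h : TropWindow 2 a010 z j) :
    z j = z (j + 2) ∨ MinAt01 z j ∨ MinAt12 z j := by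
  obtain ⟨i₁, i₂, h₁, h₂, hne, hmin₁, hmin₂⟩ := h
  have := hmin₁ 0; have := hmin₁ 1; have := hmin₁ 2
  have := hmin₂ 0; have := hmin₂ 1; have := hmin₂ 2
  rcases lt_trichotomy (z j) (z (j + 2)) with hlt | heq | hgt
  · refine Or.inr (Or.inl ⟨?_, hlt⟩)
    interval_cases i₁ <;> interval_cases i₂ <;> simp_all [a010] <;> linarith
  · exact Or.inl heq
  · refine Or.inr (Or.inr ⟨?_, hgt⟩)
    interval_cases i₁ <;> interval_cases i₂ <;> simp_all [a010] <;> linarith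

theorem not_minAt_succ {z : ℕ → ℝ} {j : ℕ} (h : MinAt01 z j ∨ MinAt12 z j) :
    ¬ (MinAt01 z (j + 1) ∨ MinAt12 z (j + 1)) := by
  unfold MinAt01 MinAt12 at *
  rw [show j + 1 + 2 = j + 3 by ring, show j + 1 + 1 = j + 2 by ring]
  rintro (⟨_, _⟩ | ⟨_, _⟩) <;> rcases h with ⟨_, _⟩ | ⟨_, _⟩ <;> linarith

section Scan

open Classical

noncomputable def leftFree (s : ℕ) (z : ℕ → ℝ) : Finset (Fin s) :=
  Finset.univ.filter fun k => k.1 < 2 ∨ MinAt01 z (k.1 - 2)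

noncomputable def rightFree (s : ℕ) (z : ℕ → ℝ) : Finset (Fin s) :=
  Finset.univ.filter fun k => s ≤ k.1 + 2 ∨ MinAt12 z k.1

variable {s : ℕ} {z : ℕ → ℝ}

theorem exists_leftFree_add_int (hz : ∀ j, j + 2 < s → TropWindow 2 a010 z j) (k : Fin s) :
    ∃ f ∈ leftFree s z, ∃ n : ℤ, z k = z f + n := by
  refine wellFounded_lt.exists_mem_add_int (z := fun k : Fin s => z k) (fun k hk => ?_) k
  simp only [leftFree, Finset.mem_filter, Finset.mem_univ, true_and, not_or, not_lt] at hk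
  obtain ⟨hk2, hnot01⟩ := hk
  have hj : k.1 - 2 + 2 = k.1 := by omega
  rcases tropWindow_a010 (hz (k.1 - 2) (by omega)) with hA | hB | ⟨hC, -⟩
  · refine ⟨⟨k.1 - 2, by omega⟩, Fin.lt_def.2 (show k.1 - 2 < k.1 by omega), 0, ?_⟩
    simp [hA, hj]
  · exact absurd hB hnot01
  · refine ⟨⟨k.1 - 1, by omega⟩, Fin.lt_def.2 (show k.1 - 1 < k.1 by omega), 1, ?_⟩
    rw [hj, show k.1 - 2 + 1 = k.1 - 1 by omega] at hC
    simp [hC]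

theorem exists_rightFree_add_int (hz : ∀ j, j + 2 < s → TropWindow 2 a010 z j) (k : Fin s) :
    ∃ f ∈ rightFree s z, ∃ n : ℤ, z k = z f + n := by
  refine wellFounded_gt.exists_mem_add_int (z := fun k : Fin s => z k) (fun k hk => ?_) k
  simp only [rightFree, Finset.mem_filter, Finset.mem_univ, true_and, not_or, not_le] at hk
  obtain ⟨hk2, hnot12⟩ := hk
  rcases tropWindow_a010 (hz k.1 hk2) with hA | ⟨hB, -⟩ | hC
  · exact ⟨⟨k.1 + 2, hk2⟩, Fin.lt_def.2 (Nat.lt_add_of_pos_right two_pos), 0, by simp [hA]⟩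
  · exact ⟨⟨k.1 + 1, by omega⟩, Fin.lt_def.2 k.1.lt_succ_self, 1, by simp [hB]⟩
  · exact absurd hC hnot12

theorem card_leftFree_le :
    (leftFree s z).card ≤ 2 + ((Finset.range (s - 2)).filter (MinAt01 z)).card := by
  calc (leftFree s z).card
      ≤ (Finset.range 2 ∪ ((Finset.range (s - 2)).filter (MinAt01 z)).image (· + 2)).card := by
        refine Finset.card_le_card_of_injOn Fin.val (fun k hk => ?_) Fin.val_injective.injOn
        simp only [leftFree, Finset.coe_filter, Finset.mem_univ, true_and, Set.mem_ofPred_eq]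
          at hk
        simp only [Finset.coe_union, Finset.coe_range, Finset.coe_image, Finset.coe_filter,
          Finset.mem_range, Set.mem_union, Set.mem_Iio, Set.mem_image, Set.mem_ofPred_eq]
        have := k.2
        by_cases hk2 : k.1 < 2
        · exact Or.inl hk2
        · exact Or.inr ⟨k.1 - 2, ⟨by omega, hk.resolve_left hk2⟩, by omega⟩
    _ ≤ 2 + _ := (Finset.card_union_le _ _).trans (by simpa using Finset.card_image_le)

theorem card_rightFree_le :
    (rightFree s z).card ≤ 2 + ((Finset.range (s - 2)).filter (MinAt12 z)).card := by
  calc (rightFree s z).card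
      ≤ (Finset.Ico (s - 2) s ∪ (Finset.range (s - 2)).filter (MinAt12 z)).card := by
        refine Finset.card_le_card_of_injOn Fin.val (fun k hk => ?_) Fin.val_injective.injOn
        simp only [rightFree, Finset.coe_filter, Finset.mem_univ, true_and, Set.mem_ofPred_eq]
          at hk
        simp only [Finset.coe_union, Finset.coe_Ico, Finset.coe_filter, Finset.mem_range,
          Set.mem_union, Set.mem_Ico, Set.mem_ofPred_eq]
        have := k.2
        by_cases hk2 : s ≤ k.1 + 2
        · exact Or.inl ⟨by omega, k.2⟩
        · exact Or.inr ⟨by omega, hk.resolve_left hk2⟩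
    _ ≤ 2 + _ := (Finset.card_union_le _ _).trans (by rw [Nat.card_Ico]; omega)

theorem card_minAt01_add_card_minAt12_le :
    ((Finset.range (s - 2)).filter (MinAt01 z)).card +
      ((Finset.range (s - 2)).filter (MinAt12 z)).card ≤ (s - 1) / 2 := by
  have hdisj : Disjoint ((Finset.range (s - 2)).filter (MinAt01 z))
      ((Finset.range (s - 2)).filter (MinAt12 z)) :=
    Finset.disjoint_filter.2 fun j _ hB hC => hB.2.not_gt hC.2
  rw [← Finset.card_union_of_disjoint hdisj, ← Finset.filter_or]
  refine (Finset.card_le_half_of_succ_notMem (Finset.filter_subset _ _) ?_).trans (by omega)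
  intro j hj hj1
  exact not_minAt_succ (Finset.mem_filter.1 hj).2 (Finset.mem_filter.1 hj1).2

end Scan

theorem dimH_tropD_a010_le (s : ℕ) : dimH (tropD 2 a010 s) ≤ (2 + (s - 1) / 4 : ℕ) := by
  classical
  refine dimH_le_of_forall_exists_finset_add_int fun y hy => ?_
  set z : ℕ → ℝ := fun k => if h : k < s then y ⟨k, h⟩ else 0
  have hcount := card_minAt01_add_card_minAt12_le (s := s) (z := z)
  obtain ⟨F, hF, hgen⟩ : ∃ F : Finset (Fin s), F.card ≤ 2 + (s - 1) / 4 ∧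
      ∀ k : Fin s, ∃ f ∈ F, ∃ n : ℤ, z k = z f + n := by
    by_cases h : ((Finset.range (s - 2)).filter (MinAt01 z)).card ≤
        ((Finset.range (s - 2)).filter (MinAt12 z)).card
    · exact ⟨leftFree s z, card_leftFree_le.trans (by omega), exists_leftFree_add_int hy⟩
    · exact ⟨rightFree s z, card_rightFree_le.trans (by omega), exists_rightFree_add_int hy⟩
  exact ⟨F, hF, by simpa [z] using hgen⟩

theorem tropWindow_a010_of_mod_four {s j : ℕ} {z : ℕ → ℝ} (hj : j + 2 < s)
    (hodd : ∀ k < s, k % 2 = 1 → z k = 0) (htwo : ∀ k < s, k % 4 = 2 → z k = 1)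
    (hzero : ∀ k < s, k % 4 = 0 → 1 ≤ z k) : TropWindow 2 a010 z j := by
  have ha : ∀ i, (a010 i : ℝ) = if i = 1 then 1 else 0 := fun i => by
    unfold a010; split_ifs <;> simp
  rcases (by omega : j % 4 = 0 ∨ j % 4 = 2 ∨ j % 2 = 1) with h | h | h
  · have := hzero j (by omega) h
    have := hodd (j + 1) (by omega) (by omega)
    have := htwo (j + 2) hj (by omega)
    refine ⟨1, 2, by norm_num, le_rfl, by norm_num, ?_, ?_⟩ <;> intro i hi <;>
      interval_cases i <;> simp only [ha] <;> norm_num <;> linarith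
  · have := htwo j (by omega) h
    have := hodd (j + 1) (by omega) (by omega)
    have := hzero (j + 2) hj (by omega)
    refine ⟨0, 1, by norm_num, by norm_num, by norm_num, ?_, ?_⟩ <;> intro i hi <;>
      interval_cases i <;> simp only [ha] <;> norm_num <;> linarith
  · have := hodd j (by omega) h
    have : 1 ≤ z (j + 1) := by
      rcases (by omega : (j + 1) % 4 = 0 ∨ (j + 1) % 4 = 2) with h' | h'
      · exact hzero _ (by omega) h'
      · exact (htwo _ (by omega) h').ge
    have := hodd (j + 2) hj (by omega)
    refine ⟨0, 2, by norm_num, le_rfl, by norm_num, ?_, ?_⟩ <;> intro i hi <;>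
      interval_cases i <;> simp only [ha] <;> norm_num <;> linarith

theorem le_dimH_tropD_a010 (s : ℕ) : ((s + 3) / 4 : ℕ) ≤ dimH (tropD 2 a010 s) := by
  set m := (s + 3) / 4
  let G : (Fin m → ℝ) → (Fin s → ℝ) := fun x k =>
    if h : k.1 % 4 = 0 then x ⟨k.1 / 4, by omega⟩ else if k.1 % 2 = 1 then 0 else 1
  let U : Set (Fin m → ℝ) := {x | ∀ i, 1 < x i}
  have hU : dimH U = m := by
    have hopen : IsOpen U := by
      simpa only [U, Set.ofPred_forall] using
        isOpen_iInter_of_finite fun i => isOpen_lt continuous_const (continuous_apply i)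
    rw [Real.dimH_of_nonempty_interior, Module.finrank_fin_fun]
    exact hopen.interior_eq.symm ▸ ⟨fun _ => 2, fun _ => one_lt_two⟩
  have hG : AntilipschitzWith 1 G := by
    refine AntilipschitzWith.of_le_mul_dist fun x x' => ?_
    rw [NNReal.coe_one, one_mul, dist_pi_le_iff dist_nonneg]
    intro i
    have hk : 4 * i.1 < s := by omega
    have hGk : ∀ x, G x ⟨4 * i.1, hk⟩ = x i := fun x => by simp [G]
    simpa only [hGk] using dist_le_pi_dist (G x) (G x') ⟨4 * i.1, hk⟩
  have hsub : G '' U ⊆ tropD 2 a010 s := by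
    rintro - ⟨x, hx, rfl⟩ j hj
    refine tropWindow_a010_of_mod_four hj (fun k hk h => ?_) (fun k hk h => ?_)
      (fun k hk h => ?_)
    · simp [G, hk, h, show k % 4 ≠ 0 by omega]
    · simp [G, hk, h, show k % 2 ≠ 1 by omega]
    · simpa [G, hk, h] using (hx _).le
  calc ((m : ℕ) : ENNReal) = dimH U := hU.symm
    _ ≤ dimH (G '' U) := hG.le_dimH_image U
    _ ≤ dimH (tropD 2 a010 s) := dimH_mono hsub

theorem tropHilbert_a010_le (s : ℕ) : tropHilbert 2 a010 s ≤ s / 4 + 2 := by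
  have hnat : ((2 + (s - 1) / 4 : ℕ) : ℝ) ≤ s / 4 + 2 := by
    rw [Nat.cast_add, Nat.cast_ofNat, add_comm, add_le_add_iff_right, le_div_iff₀ four_pos]
    exact_mod_cast (by omega : (s - 1) / 4 * 4 ≤ s)
  refine (ENNReal.toReal_mono (ENNReal.natCast_ne_top _) (dimH_tropD_a010_le s)).trans ?_
  rwa [ENNReal.toReal_natCast]

theorem le_tropHilbert_a010 (s : ℕ) : (s / 4 : ℝ) ≤ tropHilbert 2 a010 s := by
  have hfin : dimH (tropD 2 a010 s) ≠ ⊤ :=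
    ne_top_of_le_ne_top (ENNReal.natCast_ne_top _) (dimH_tropD_a010_le s)
  have hnat : (s / 4 : ℝ) ≤ ((s + 3) / 4 : ℕ) := by
    rw [div_le_iff₀ four_pos]
    exact_mod_cast (by omega : s ≤ (s + 3) / 4 * 4)
  refine hnat.trans ?_
  rw [← ENNReal.toReal_natCast]
  exact ENNReal.toReal_mono hfin (le_dimH_tropD_a010 s)

/-- For the vector `a = (0, 1, 0)` the tropical entropy equals `1/4`:
`lim_{s→∞} d(s)/s = 1/4`. Hence the lower bound `H ≥ 1/4` for non-regular integer
vectors is sharp. -/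
theorem tropEntropy_010 :
    Tendsto (fun s : ℕ => tropHilbert 2 (fun i => if i = 1 then 1 else 0) s / s)
      atTop (𝓝 (1 / 4)) := by
  change Tendsto (fun s : ℕ => tropHilbert 2 a010 s / s) atTop (𝓝 (1 / 4))
  have hupper : Tendsto (fun s : ℕ => (1 / 4 : ℝ) + 2 / s) atTop (𝓝 (1 / 4)) := by
    simpa using tendsto_const_nhds.add (tendsto_const_div_atTop_nhds_zero_nat (2 : ℝ))
  refine tendsto_of_tendsto_of_tendsto_of_le_of_le' tendsto_const_nhds hupper ?_ ?_ <;>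
    filter_upwards [eventually_gt_atTop 0] with s hs <;>
    have hs' : (0 : ℝ) < s := Nat.cast_pos.2 hs
  · rw [le_div_iff₀ hs']
    linarith [le_tropHilbert_a010 s]
  · rw [div_le_iff₀ hs', add_mul, div_mul_cancel₀ _ hs'.ne']
    linarith [tropHilbert_a010_le s]
end

section
/- For the vector a = (0, 0, 0) ∈ ℤ³ the tropical entropy equals H(a) = 1/3 = 1 − 2/(n+1) with n = 2; hence the upper bound H ≤ 1 − 2/(n+1) is attained. -/
open Filter Topology

/-!
If the minimum of every window `z j, z (j+1), z (j+2)` is attained twice, a position `j` that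
is the last occurrence of its value (and not among the last two positions) is followed by two
equal smaller values, and two such positions are at least three apart. So a sequence in `D(s)`
takes at most `s/3 + 2` distinct values, and `D(s)` is covered by finitely many Lipschitz images
of `ℝ^(s/3+2)`. Conversely, the sequences vanishing off the positions `3k + 2` and nonnegative
on them lie in `D(s)` and form a set of dimension `⌊s/3⌋`. Hence `d(s) = s/3 + O(1)`.
-/

open Finset Function

theorem TropWindow.trichotomy {z : ℕ → ℝ} {j : ℕ} (h : TropWindow 2 (fun _ => 0) z j) :
    (z j = z (j + 1) ∧ z j ≤ z (j + 2)) ∨ (z j = z (j + 2) ∧ z j ≤ z (j + 1)) ∨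
      (z (j + 1) = z (j + 2) ∧ z (j + 1) ≤ z j) := by
  obtain ⟨i₁, i₂, h₁, h₂, hne, m₁, m₂⟩ := h
  simp only [Int.cast_zero, add_zero] at m₁ m₂
  have := m₁ 0; have := m₁ 1; have := m₁ 2; have := m₂ 0; have := m₂ 1; have := m₂ 2
  interval_cases i₁ <;> interval_cases i₂ <;> simp_all <;> grind

theorem tropWindow_zero_of_nonneg {n : ℕ} {z : ℕ → ℝ} {j i₁ i₂ : ℕ}
    (hz : ∀ i ≤ n, 0 ≤ z (j + i)) (h₁ : i₁ ≤ n) (h₂ : i₂ ≤ n) (hne : i₁ ≠ i₂)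
    (e₁ : z (j + i₁) = 0) (e₂ : z (j + i₂) = 0) : TropWindow n (fun _ => 0) z j :=
  ⟨i₁, i₂, h₁, h₂, hne, fun i hi => by simpa [e₁] using hz i hi,
    fun i hi => by simpa [e₂] using hz i hi⟩

open scoped Classical in
noncomputable def lastOccurrences (z : ℕ → ℝ) (s : ℕ) : Finset ℕ :=
  (range s).filter fun j => ∀ k, j < k → k < s → z k ≠ z j

theorem mem_lastOccurrences {z : ℕ → ℝ} {s j : ℕ} :
    j ∈ lastOccurrences z s ↔ j < s ∧ ∀ k, j < k → k < s → z k ≠ z j := by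
  simp [lastOccurrences]

theorem image_lastOccurrences (z : ℕ → ℝ) (s : ℕ) :
    (lastOccurrences z s).image z = (range s).image z := by
  refine (image_subset_image fun j hj => mem_range.2 (mem_lastOccurrences.1 hj).1).antisymm
    fun v hv => ?_
  obtain ⟨i, hi, rfl⟩ := mem_image.1 hv
  obtain ⟨k, hk, hmax⟩ :=
    ((range s).filter (z · = z i)).exists_max_image id ⟨i, mem_filter.2 ⟨hi, rfl⟩⟩
  rw [mem_filter] at hk
  refine mem_image.2 ⟨k, mem_lastOccurrences.2 ⟨mem_range.1 hk.1, fun k' hkk' hk's heq => ?_⟩,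
    hk.2⟩
  exact (hmax k' (mem_filter.2 ⟨mem_range.2 hk's, heq.trans hk.2⟩)).not_gt hkk'

section
variable {s : ℕ} {z : ℕ → ℝ} (hW : ∀ j, j + 2 < s → TropWindow 2 (fun _ => 0) z j)
include hW

theorem eq_and_lt_of_mem_lastOccurrences {j : ℕ} (hj : j ∈ lastOccurrences z s)
    (hjs : j + 2 < s) : z (j + 1) = z (j + 2) ∧ z (j + 2) < z j := by
  have hlast := (mem_lastOccurrences.1 hj).2
  rcases (hW j hjs).trichotomy with ⟨h, -⟩ | ⟨h, -⟩ | ⟨h, hle⟩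
  · exact absurd h.symm (hlast (j + 1) (by omega) (by omega))
  · exact absurd h.symm (hlast (j + 2) (by omega) (by omega))
  · exact ⟨h, (h ▸ hle).lt_of_ne (hlast (j + 2) (by omega) (by omega))⟩

theorem add_three_le_of_mem_lastOccurrences {i j : ℕ} (hi : i ∈ lastOccurrences z s)
    (hj : j ∈ lastOccurrences z s) (hij : i < j) (hjs : j + 2 < s) : i + 3 ≤ j := by
  obtain ⟨hi₁, hi₂⟩ := eq_and_lt_of_mem_lastOccurrences hW hi (by omega)
  by_contra! hlt
  obtain rfl | rfl : j = i + 1 ∨ j = i + 2 := by omega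
  · exact absurd hi₁.symm ((mem_lastOccurrences.1 hj).2 (i + 2) (by omega) (by omega))
  · obtain ⟨hj₁, hj₂⟩ := eq_and_lt_of_mem_lastOccurrences hW hj hjs
    -- in the window `i + 1` the minimum `z (i + 3)` would be attained only once
    have := (hW (i + 1) (by omega)).trichotomy
    simp only [add_assoc, Nat.reduceAdd] at this hj₁ hj₂
    rcases this with ⟨h, h'⟩ | ⟨h, h'⟩ | ⟨h, h'⟩ <;> linarith

theorem card_lastOccurrences_le : (lastOccurrences z s).card ≤ s / 3 + 2 := by
  rw [← card_filter_add_card_filter_not (p := fun j => j + 2 < s)]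
  gcongr
  · calc _ ≤ (range (s / 3)).card := card_le_card_of_injOn (· / 3) ?_ ?_
      _ = s / 3 := card_range _
    · intro j hj
      simp only [coe_filter, Set.mem_ofPred_eq, coe_range, Set.mem_Iio] at hj ⊢
      omega
    · intro i hi j hj hij
      simp only [coe_filter, Set.mem_ofPred_eq] at hi hj hij
      rcases lt_trichotomy i j with h | h | h
      · have := add_three_le_of_mem_lastOccurrences hW hi.1 hj.1 h hj.2; omega
      · exact h
      · have := add_three_le_of_mem_lastOccurrences hW hj.1 hi.1 h hi.2; omega
  · calc _ ≤ (Ico (s - 2) s).card := card_le_card fun j hj => by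
          simp only [mem_filter, mem_lastOccurrences, mem_Ico] at hj ⊢; omega
      _ ≤ 2 := by simp; omega

end

open scoped ENNReal

theorem card_image_le_of_mem_tropD {s : ℕ} {y : Fin s → ℝ}
    (hy : y ∈ tropD 2 (fun _ => 0) s) : (univ.image y).card ≤ s / 3 + 2 := by
  set z : ℕ → ℝ := fun k => if h : k < s then y ⟨k, h⟩ else 0
  have hz : univ.image y = (range s).image z := by
    ext v
    simp only [mem_image, mem_univ, true_and, mem_range]
    constructor
    · rintro ⟨i, rfl⟩
      exact ⟨i, i.2, dif_pos i.2⟩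
    · rintro ⟨k, hk, rfl⟩
      exact ⟨⟨k, hk⟩, by simp [z, hk]⟩
  rw [hz, ← image_lastOccurrences]
  exact card_image_le.trans (card_lastOccurrences_le hy)

theorem lipschitzWith_comp_right {ι κ : Type*} [Fintype ι] [Fintype κ] (c : κ → ι) :
    LipschitzWith 1 fun t : ι → ℝ => t ∘ c :=
  LipschitzWith.of_dist_le_mul fun t t' => by
    rw [NNReal.coe_one, one_mul]
    exact (dist_pi_le_iff dist_nonneg).2 fun k => dist_le_pi_dist t t' (c k)

theorem dimH_setOf_card_image_le {ι : Type*} [Fintype ι] (m : ℕ) :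
    dimH {y : ι → ℝ | (univ.image y).card ≤ m} ≤ m := by
  have cover : {y : ι → ℝ | (univ.image y).card ≤ m} ⊆
      ⋃ c : ι → Fin m, Set.range fun t : Fin m → ℝ => t ∘ c := by
    intro y hy
    let e : univ.image y → Fin m := fun v => Fin.castLE hy ((univ.image y).equivFin v)
    have he : Injective e := (Fin.castLE_injective hy).comp (Equiv.injective _)
    exact Set.mem_iUnion.2 ⟨fun i => e ⟨y i, mem_image_of_mem y (mem_univ i)⟩,
      extend e Subtype.val 0, funext fun i => he.extend_apply _ _ _⟩
  calc _ ≤ _ := dimH_mono cover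
    _ = ⨆ c : ι → Fin m, dimH (Set.range fun t : Fin m → ℝ => t ∘ c) := dimH_iUnion _
    _ ≤ m := iSup_le fun c =>
      (lipschitzWith_comp_right c).dimH_range_le.trans (Real.dimH_univ_pi_fin m).le

theorem card_le_dimH_of_extend_mem {ι κ : Type*} [Fintype ι] [Fintype κ] {c : κ → ι}
    (hc : Injective c) {U : Set (κ → ℝ)} (hU : (interior U).Nonempty) {A : Set (ι → ℝ)}
    (hA : ∀ u ∈ U, extend c u 0 ∈ A) : (Fintype.card κ : ℝ≥0∞) ≤ dimH A :=
  calc (Fintype.card κ : ℝ≥0∞) = dimH U := by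
        rw [Real.dimH_of_nonempty_interior hU, Module.finrank_fintype_fun_eq_card]
    _ ≤ dimH ((· ∘ c) '' A) := dimH_mono fun u hu => ⟨_, hA u hu, funext (hc.extend_apply u 0)⟩
    _ ≤ dimH A := (lipschitzWith_comp_right c).dimH_image_le A

def everyThird (s : ℕ) : Fin (s / 3) → Fin s := fun k => ⟨3 * k + 2, by omega⟩

theorem everyThird_injective (s : ℕ) : Injective (everyThird s) := fun k l h => by
  simpa [everyThird, Fin.ext_iff] using h

theorem extend_everyThird_mem_tropD {s : ℕ} {u : Fin (s / 3) → ℝ} (hu : 0 ≤ u) :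
    extend (everyThird s) u 0 ∈ tropD 2 (fun _ => 0) s := by
  intro j hj
  set z : ℕ → ℝ := fun k => if h : k < s then extend (everyThird s) u 0 ⟨k, h⟩ else 0
  have hz : ∀ k, 0 ≤ z k := fun k => by
    simp only [z]
    split_ifs
    exacts [extend_nonneg hu le_rfl _, le_rfl]
  have hz₀ : ∀ k, k % 3 ≠ 2 → z k = 0 := by
    intro k hk
    simp only [z]
    split_ifs with hks
    · refine extend_apply' _ _ _ ?_
      rintro ⟨l, hl⟩
      have := congrArg Fin.val hl
      simp only [everyThird] at this
      omega
    · rfl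
  have hw : ∀ i ≤ 2, 0 ≤ z (j + i) := fun i _ => hz _
  obtain h | h | h : j % 3 = 0 ∨ j % 3 = 1 ∨ j % 3 = 2 := by omega
  · exact tropWindow_zero_of_nonneg hw (i₁ := 0) (i₂ := 1) (by omega) (by omega) (by omega)
      (hz₀ _ (by omega)) (hz₀ _ (by omega))
  · exact tropWindow_zero_of_nonneg hw (i₁ := 0) (i₂ := 2) (by omega) (by omega) (by omega)
      (hz₀ _ (by omega)) (hz₀ _ (by omega))
  · exact tropWindow_zero_of_nonneg hw (i₁ := 1) (i₂ := 2) (by omega) (by omega) (by omega)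
      (hz₀ _ (by omega)) (hz₀ _ (by omega))

theorem natCast_le_tropHilbert (s : ℕ) : ((s / 3 : ℕ) : ℝ) ≤ tropHilbert 2 (fun _ => 0) s := by
  have hU : (interior (Set.univ.pi fun _ => Set.Ioi 0 : Set (Fin (s / 3) → ℝ))).Nonempty := by
    rw [(isOpen_set_pi Set.finite_univ fun _ _ => isOpen_Ioi).interior_eq]
    exact ⟨fun _ => 1, Set.mem_univ_pi.2 fun _ => Set.mem_Ioi.2 one_pos⟩
  have := card_le_dimH_of_extend_mem (everyThird_injective s) hU fun u hu =>
    extend_everyThird_mem_tropD fun k => (Set.mem_univ_pi.1 hu k).le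
  simpa [tropHilbert] using ENNReal.toReal_mono (Real.dimH_ne_top _) this

theorem tropHilbert_le (s : ℕ) : tropHilbert 2 (fun _ => 0) s ≤ ((s / 3 + 2 : ℕ) : ℝ) := by
  have := (dimH_mono fun _ hy => card_image_le_of_mem_tropD hy).trans
    (dimH_setOf_card_image_le (ι := Fin s) (s / 3 + 2))
  rw [tropHilbert, ← ENNReal.toReal_natCast]
  exact ENNReal.toReal_mono (ENNReal.natCast_ne_top _) this

theorem tendsto_div_of_abs_sub_mul_le {f : ℕ → ℝ} {c C : ℝ} (h : ∀ s, |f s - c * s| ≤ C) :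
    Tendsto (fun s : ℕ => f s / s) atTop (𝓝 c) := by
  have hrem : Tendsto (fun s : ℕ => c + (f s - c * s) / s) atTop (𝓝 (c + 0)) :=
    (squeeze_zero_norm (fun s => by rw [norm_div, Real.norm_natCast]; gcongr; exact h s)
      (tendsto_const_div_atTop_nhds_zero_nat C)).const_add c
  rw [add_zero] at hrem
  refine hrem.congr' ?_
  filter_upwards [eventually_ne_atTop 0] with s hs
  field_simp
  ring

/-- For the vector `a = (0, 0, 0)` (with `n = 2`) the tropical entropy equals
`1/3 = 1 - 2/(n + 1)`: `lim_{s→∞} d(s)/s = 1/3`. Hence the upper bound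
`H ≤ 1 - 2/(n + 1)` is attained. -/
theorem tropEntropy_000 :
    Tendsto (fun s : ℕ => tropHilbert 2 (fun _ => 0) s / s) atTop (𝓝 (1 / 3)) := by
  refine tendsto_div_of_abs_sub_mul_le (C := 2) fun s => abs_sub_le_iff.2 ⟨?_, ?_⟩
  all_goals
    have lo := natCast_le_tropHilbert s
    have hi := tropHilbert_le s
    push_cast at hi
    have : ((s / 3 : ℕ) : ℝ) * 3 ≤ s ∧ (s : ℝ) < ((s / 3 : ℕ) + 1) * 3 := by
      constructor <;> norm_cast <;> omega
    linarith
end
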